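/- arXiv:0802.2837 — 3 statements merged into one kernel-verified Lean document; each statement's English description precedes it below -/
import Mathlib

section
/- If a countable group G carries a non-degenerate probability measure μ of finite entropy whose asymptotic entropy h(G, μ) = lim_n H(μ^n)/n vanishes, then G is amenable. -/
open List

/-! ### Amenability -/

/-- A group is amenable if it carries a left-invariant finitely additive
probability measure defined on all subsets. -/
def Amenable (G : Type*) [Group G] : Prop :=
  ∃ m : Set G → ℝ,
    m Set.univ = 1 ∧
    (∀ A : Set G, 0 ≤ m A) ∧
    (∀ A B : Set G, Disjoint A B → m (A ∪ B) = m A + m B) ∧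
    (∀ (g : G) (A : Set G), m ((g * ·) '' A) = m A)


/-! ### Entropy, convolutions and random walks -/

open scoped ENNReal

/-- The entropy `H(m) = -∑ m(x) log m(x) ∈ [0,∞]` of a discrete probability
measure. -/
noncomputable def entropy {α : Type*} (m : PMF α) : ℝ≥0∞ :=
  ∑' x, ENNReal.ofReal (Real.negMulLog (m x).toReal)

/-- Convolution of probability measures on a group:
`(μ * ν) (g) = ∑_h μ(h) ν(h⁻¹g)`. -/
noncomputable def conv {G : Type*} [Group G] (μ ν : PMF G) : PMF G :=
  μ.bind fun g => ν.map fun h => g * h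

/-- Convolution powers `μ^n` of a probability measure on a group
(`μ^0` is the point mass at the identity). -/
noncomputable def convPow {G : Type*} [Group G] (μ : PMF G) : ℕ → PMF G
  | 0 => PMF.pure 1
  | n + 1 => conv (convPow μ n) μ

/-- The convex combination `p·μ + q·ν` of two probability measures. -/
noncomputable def mixture {α : Type*} (p q : ℝ≥0∞) (μ ν : PMF α) (h : p + q = 1) :
    PMF α :=
  ⟨fun x => p * μ x + q * ν x, by
    rw [ENNReal.summable.hasSum_iff, ENNReal.tsum_add, ENNReal.tsum_mul_left,
      ENNReal.tsum_mul_left, μ.tsum_coe, ν.tsum_coe, mul_one, mul_one, h]⟩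

open Real Filter Topology Pointwise

/-!
Write `μ^(n+1) = μ * μ^n` as the mixture `∑ a, μ(a) • (a · μ^n)` of left translates of `μ^n`, all of
entropy `H(μ^n)`. The entropy of a mixture is the average entropy of its components plus their
average KL divergence from the mixture, so `μ(g) · KL(g · μ^n ‖ μ^(n+1)) ≤ H(μ^(n+1)) - H(μ^n)`.
A Pinsker-type inequality turns this into an `ℓ¹` bound, and since `H(μ^N)/N → 0`, Cauchy–Schwarz
shows that the Cesàro means of `‖g · μ^n - μ^(n+1)‖₁` tend to `0` for `g` in the support of `μ`.
Hence the Cesàro averages of the `μ^n` are asymptotically invariant under the support of `μ`, so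
under the group it generates, which is `G`; their limit along an ultrafilter is an invariant
finitely additive probability measure. Each `H(μ^n)` is finite because the entropies increase
and `H(μ^N)/N` is eventually finite.
-/

/-- The summand `a log (a / b)` of a Kullback–Leibler divergence, shifted by `b - a` (which sums
to zero over two probability vectors) to make it nonnegative. -/
noncomputable def klTerm (a b : ℝ) : ℝ := a * log a - a * log b - a + b

lemma klTerm_add_negMulLog (a b : ℝ) : klTerm a b + negMulLog a = b - a - a * log b := by
  simp only [klTerm, negMulLog]
  ring

lemma sq_sqrt_sub_sqrt_le_klTerm {a b : ℝ} (ha : 0 ≤ a) (hb : 0 ≤ b) (hab : b = 0 → a = 0) :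
    (√a - √b) ^ 2 ≤ klTerm a b := by
  rcases ha.eq_or_lt with rfl | ha
  · simp [klTerm, sq_sqrt hb]
  have hb : 0 < b := hb.lt_of_ne fun h => ha.ne' (hab h.symm)
  have hlog : log (√b / √a) ≤ √b / √a - 1 := log_le_sub_one_of_pos (by positivity)
  rw [log_div (by positivity) (by positivity), log_sqrt hb.le, log_sqrt ha.le] at hlog
  have hmul : a * (√b / √a) = √a * √b := by
    rw [mul_div_assoc', div_eq_iff (by positivity)]
    nth_rewrite 1 [← mul_self_sqrt ha.le]
    ring
  have := mul_le_mul_of_nonneg_left hlog (by positivity : (0 : ℝ) ≤ 2 * a)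
  rw [sub_sq, sq_sqrt ha.le, sq_sqrt hb.le, klTerm]
  nlinarith

lemma klTerm_nonneg {a b : ℝ} (ha : 0 ≤ a) (hb : 0 ≤ b) (hab : b = 0 → a = 0) :
    0 ≤ klTerm a b :=
  (sq_nonneg _).trans (sq_sqrt_sub_sqrt_le_klTerm ha hb hab)

lemma hasSum_mul_klTerm_add_negMulLog {ι : Type*} {w p : ι → ℝ} (hw : Summable w)
    (hwp : Summable fun i => w i * p i) (hw1 : ∑' i, w i = 1) :
    HasSum (fun i => w i * (klTerm (p i) (∑' j, w j * p j) + negMulLog (p i)))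
      (negMulLog (∑' j, w j * p j)) := by
  set L := ∑' j, w j * p j
  have hterm : ∀ i, w i * (klTerm (p i) L + negMulLog (p i))
      = L * w i - (1 + log L) * (w i * p i) := fun i => by
    rw [klTerm_add_negMulLog]
    ring
  have hL : negMulLog L = L * ∑' i, w i - (1 + log L) * L := by
    rw [hw1, negMulLog_def]
    ring
  simp_rw [hterm, hL]
  exact (hw.hasSum.mul_left L).sub (hwp.hasSum.mul_left (1 + log L))

lemma summable_sq_sqrt_sub_sqrt {ι : Type*} {f g : ι → ℝ} (hf : ∀ i, 0 ≤ f i)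
    (hg : ∀ i, 0 ≤ g i) (hfs : Summable f) (hgs : Summable g) :
    Summable fun i => (√(f i) - √(g i)) ^ 2 :=
  (hfs.add hgs).of_nonneg_of_le (fun i => sq_nonneg _) fun i => by
    nlinarith [sq_sqrt (hf i), sq_sqrt (hg i), sqrt_nonneg (f i), sqrt_nonneg (g i)]

lemma sq_tsum_abs_sub_le {ι : Type*} {f g : ι → ℝ} (hf : ∀ i, 0 ≤ f i) (hg : ∀ i, 0 ≤ g i)
    (hfs : Summable f) (hgs : Summable g) (hf1 : ∑' i, f i ≤ 1) (hg1 : ∑' i, g i ≤ 1) :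
    (∑' i, |f i - g i|) ^ 2 ≤ 4 * ∑' i, (√(f i) - √(g i)) ^ 2 := by
  have hl1 : ∑' i, |f i - g i| ≤ 2 * √(∑' i, (√(f i) - √(g i)) ^ 2) := by
    refine ((hfs.sub hgs).abs).tsum_le_of_sum_le fun s => ?_
    have hfactor : ∀ i, |f i - g i| = |√(f i) - √(g i)| * (√(f i) + √(g i)) := by
      intro i
      have hdiff : f i - g i = (√(f i) - √(g i)) * (√(f i) + √(g i)) := by
        linear_combination (-1 : ℝ) * sq_sqrt (hf i) + sq_sqrt (hg i)
      rw [hdiff, abs_mul, abs_of_nonneg (by positivity : 0 ≤ √(f i) + √(g i))]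
    have hplus : ∑ i ∈ s, (√(f i) + √(g i)) ^ 2 ≤ 2 * 2 := by
      calc ∑ i ∈ s, (√(f i) + √(g i)) ^ 2 ≤ ∑ i ∈ s, 2 * (f i + g i) := by
            gcongr with i
            nlinarith [sq_sqrt (hf i), sq_sqrt (hg i), sq_nonneg (√(f i) - √(g i))]
        _ ≤ 2 * 2 := by
            rw [← Finset.mul_sum, Finset.sum_add_distrib]
            have := hfs.sum_le_tsum s fun i _ => hf i
            have := hgs.sum_le_tsum s fun i _ => hg i
            linarith
    calc ∑ i ∈ s, |f i - g i|
        ≤ √(∑ i ∈ s, |√(f i) - √(g i)| ^ 2) * √(∑ i ∈ s, (√(f i) + √(g i)) ^ 2) := by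
          simp_rw [hfactor]
          exact sum_mul_le_sqrt_mul_sqrt s _ _
      _ ≤ √(∑' i, (√(f i) - √(g i)) ^ 2) * √(2 * 2) := by
          simp_rw [sq_abs]
          gcongr
          exact (summable_sq_sqrt_sub_sqrt hf hg hfs hgs).sum_le_tsum s fun i _ => sq_nonneg _
      _ = 2 * √(∑' i, (√(f i) - √(g i)) ^ 2) := by
          rw [sqrt_mul_self zero_le_two, mul_comm]
  calc (∑' i, |f i - g i|) ^ 2 ≤ (2 * √(∑' i, (√(f i) - √(g i)) ^ 2)) ^ 2 :=
        pow_le_pow_left₀ (tsum_nonneg fun i => abs_nonneg _) hl1 2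
    _ = 4 * ∑' i, (√(f i) - √(g i)) ^ 2 := by
        rw [mul_pow, sq_sqrt (tsum_nonneg fun i => sq_nonneg _)]
        norm_num

lemma tendsto_cesaro_of_mul_sq_le_sub {d H : ℕ → ℝ} {c : ℝ} (hc : 0 < c)
    (hdH : ∀ n, c * d n ^ 2 ≤ H (n + 1) - H n) (hH : Tendsto (fun N : ℕ => H N / N) atTop (𝓝 0)) :
    Tendsto (fun N : ℕ => (∑ n ∈ Finset.range N, d n) / N) atTop (𝓝 0) := by
  have hbound : ∀ N : ℕ, ‖(∑ n ∈ Finset.range N, d n) / N‖ ≤ √((H N / N - H 0 / N) / c) := by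
    intro N
    refine abs_le_sqrt ?_
    rcases N.eq_zero_or_pos with rfl | hN
    · simp
    have hCS := sq_sum_le_card_mul_sum_sq (s := Finset.range N) (f := d)
    have hsum : c * ∑ n ∈ Finset.range N, d n ^ 2 ≤ H N - H 0 := by
      rw [Finset.mul_sum, ← Finset.sum_range_sub H N]
      exact Finset.sum_le_sum fun n _ => hdH n
    rw [Finset.card_range] at hCS
    rw [← sub_div, div_pow, div_div, le_div_iff₀ (by positivity), div_mul_eq_mul_div,
      div_le_iff₀ (by positivity)]
    nlinarith [mul_le_mul_of_nonneg_right hCS (by positivity : (0 : ℝ) ≤ N * c),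
      mul_le_mul_of_nonneg_left hsum (by positivity : (0 : ℝ) ≤ N ^ 2)]
  have hlim : Tendsto (fun N : ℕ => √((H N / N - H 0 / N) / c)) atTop (𝓝 0) := by
    simpa using ((hH.sub (tendsto_const_div_atTop_nhds_zero_nat (H 0))).div_const c).sqrt
  exact squeeze_zero_norm hbound hlim

structure IsMean {α : Type*} (m : Set α → ℝ) : Prop where
  apply_univ : m Set.univ = 1
  nonneg : ∀ s, 0 ≤ m s
  apply_union : ∀ s t : Set α, Disjoint s t → m (s ∪ t) = m s + m t

lemma IsMean.le_one {α : Type*} {m : Set α → ℝ} (hm : IsMean m) (s : Set α) : m s ≤ 1 := by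
  have h := hm.apply_union s sᶜ disjoint_compl_right
  rw [Set.union_compl_self, hm.apply_univ] at h
  linarith [hm.nonneg sᶜ]

lemma isMean_cesaro {α : Type*} {m : ℕ → Set α → ℝ} (hm : ∀ n, IsMean (m n)) {N : ℕ}
    (hN : N ≠ 0) : IsMean fun s => (∑ n ∈ Finset.range N, m n s) / N where
  apply_univ := by simp [(hm _).apply_univ, hN]
  nonneg s := div_nonneg (Finset.sum_nonneg fun n _ => (hm n).nonneg s) N.cast_nonneg
  apply_union s t hst := by
    simp only [(hm _).apply_union s t hst, Finset.sum_add_distrib, add_div]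

namespace PMF

variable {α β : Type*}

lemma toReal_apply_le_one (p : PMF α) (a : α) : (p a).toReal ≤ 1 :=
  ENNReal.toReal_le_of_le_ofReal zero_le_one (by simpa using p.coe_le_one a)

lemma toReal_apply_eq_zero_iff (p : PMF α) (a : α) : (p a).toReal = 0 ↔ p a = 0 := by
  simp [ENNReal.toReal_eq_zero_iff, p.apply_ne_top a]

lemma summable_toReal (p : PMF α) : Summable fun a => (p a).toReal :=
  ENNReal.summable_toReal p.tsum_coe_ne_top

lemma tsum_toReal (p : PMF α) : ∑' a, (p a).toReal = 1 := by
  rw [← ENNReal.tsum_toReal_eq p.apply_ne_top, p.tsum_coe, ENNReal.toReal_one]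

lemma toReal_bind_apply (p : PMF α) (f : α → PMF β) (b : β) :
    (p.bind f b).toReal = ∑' a, (p a).toReal * (f a b).toReal := by
  rw [bind_apply, ENNReal.tsum_toReal_eq fun a =>
    ENNReal.mul_ne_top (p.apply_ne_top a) ((f a).apply_ne_top b)]
  simp only [ENNReal.toReal_mul]

lemma apply_eq_zero_of_bind_apply_eq_zero {p : PMF α} {f : α → PMF β} {a : α} {b : β}
    (ha : p a ≠ 0) (hb : p.bind f b = 0) : f a b = 0 := by
  by_contra h
  exact (mem_support_bind_iff p f b).2 ⟨a, ha, h⟩ hb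

/-- Only meaningful when `p ≪ q`: elsewhere the convention `log 0 = 0` gives finite junk
summands. -/
noncomputable def klDiv (p q : PMF α) : ℝ≥0∞ :=
  ∑' a, ENNReal.ofReal (klTerm (p a).toReal (q a).toReal)

lemma ofReal_negMulLog_bind_apply (p : PMF α) (f : α → PMF β) (b : β) :
    ENNReal.ofReal (negMulLog (p.bind f b).toReal) =
      ∑' a, p a * (ENNReal.ofReal (klTerm (f a b).toReal (p.bind f b).toReal) +
        ENNReal.ofReal (negMulLog (f a b).toReal)) := by
  have hsum := hasSum_mul_klTerm_add_negMulLog p.summable_toReal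
    (p.summable_toReal.of_nonneg_of_le (fun a => by positivity) fun a =>
      mul_le_of_le_one_right ENNReal.toReal_nonneg ((f a).toReal_apply_le_one b))
    p.tsum_toReal
  rw [← toReal_bind_apply] at hsum
  have hkl : ∀ a, p a ≠ 0 → 0 ≤ klTerm (f a b).toReal (p.bind f b).toReal := fun a ha =>
    klTerm_nonneg ENNReal.toReal_nonneg ENNReal.toReal_nonneg fun h => by
      rw [toReal_apply_eq_zero_iff] at h ⊢
      exact apply_eq_zero_of_bind_apply_eq_zero ha h
  have hent : ∀ a, 0 ≤ negMulLog (f a b).toReal := fun a =>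
    negMulLog_nonneg ENNReal.toReal_nonneg ((f a).toReal_apply_le_one b)
  rw [← hsum.tsum_eq, ENNReal.ofReal_tsum_of_nonneg ?_ hsum.summable]
  · congr 1
    funext a
    by_cases ha : p a = 0
    · simp [ha]
    rw [ENNReal.ofReal_mul ENNReal.toReal_nonneg, ENNReal.ofReal_toReal (p.apply_ne_top a),
      ENNReal.ofReal_add (hkl a ha) (hent a)]
  · intro a
    by_cases ha : p a = 0
    · simp [ha]
    exact mul_nonneg ENNReal.toReal_nonneg (add_nonneg (hkl a ha) (hent a))

theorem entropy_bind (p : PMF α) (f : α → PMF β) :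
    entropy (p.bind f) = ∑' a, p a * (klDiv (f a) (p.bind f) + entropy (f a)) := by
  simp_rw [entropy, ofReal_negMulLog_bind_apply, klDiv]
  rw [ENNReal.tsum_comm]
  congr 1
  funext a
  rw [ENNReal.tsum_mul_left, ENNReal.tsum_add]

noncomputable def l1Dist (p q : PMF α) : ℝ := ∑' a, |(p a).toReal - (q a).toReal|

lemma sq_l1Dist_le_klDiv (p q : PMF α) (hpq : ∀ a, q a = 0 → p a = 0) (h : klDiv p q ≠ ⊤) :
    l1Dist p q ^ 2 ≤ 4 * (klDiv p q).toReal := by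
  have hp : ∀ a, 0 ≤ (p a).toReal := fun a => ENNReal.toReal_nonneg
  have hq : ∀ a, 0 ≤ (q a).toReal := fun a => ENNReal.toReal_nonneg
  refine (sq_tsum_abs_sub_le hp hq p.summable_toReal q.summable_toReal p.tsum_toReal.le
    q.tsum_toReal.le).trans ?_
  gcongr
  rw [← ENNReal.ofReal_le_iff_le_toReal h, ENNReal.ofReal_tsum_of_nonneg (fun a => sq_nonneg _)
    (summable_sq_sqrt_sub_sqrt hp hq p.summable_toReal q.summable_toReal)]
  refine ENNReal.tsum_le_tsum fun a => ENNReal.ofReal_le_ofReal ?_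
  refine sq_sqrt_sub_sqrt_le_klTerm (hp a) (hq a) fun ha => ?_
  rw [toReal_apply_eq_zero_iff] at ha ⊢
  exact hpq a ha

lemma toReal_toOuterMeasure_apply (p : PMF α) (s : Set α) :
    (p.toOuterMeasure s).toReal = ∑' a, s.indicator (fun a => (p a).toReal) a := by
  rw [toOuterMeasure_apply, ENNReal.tsum_toReal_eq fun a =>
    ne_top_of_le_ne_top (p.apply_ne_top a) (Set.indicator_le_self s p a)]
  congr 1
  funext a
  by_cases ha : a ∈ s <;> simp [ha]

lemma abs_toReal_toOuterMeasure_sub_le_l1Dist (p q : PMF α) (s : Set α) :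
    |(p.toOuterMeasure s).toReal - (q.toOuterMeasure s).toReal| ≤ l1Dist p q := by
  have hp := p.summable_toReal.indicator s
  have hq := q.summable_toReal.indicator s
  rw [toReal_toOuterMeasure_apply, toReal_toOuterMeasure_apply, ← hp.tsum_sub hq]
  refine (norm_tsum_le_tsum_norm (hp.sub hq).norm).trans ?_
  refine (hp.sub hq).norm.tsum_le_tsum (fun a => ?_) (p.summable_toReal.sub q.summable_toReal).abs
  by_cases ha : a ∈ s <;> simp [ha]

lemma isMean_toOuterMeasure (p : PMF α) :
    IsMean fun s => (p.toOuterMeasure s).toReal where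
  apply_univ := by
    rw [(p.toOuterMeasure_apply_eq_one_iff _).2 (Set.subset_univ _), ENNReal.toReal_one]
  nonneg _ := ENNReal.toReal_nonneg
  apply_union s t hst := by
    simp only [toOuterMeasure_apply]
    rw [← ENNReal.toReal_add (p.tsum_coe_indicator_ne_top s) (p.tsum_coe_indicator_ne_top t),
      ← ENNReal.tsum_add]
    simp only [Set.indicator_union_of_disjoint hst]

end PMF

section Group

variable {G : Type*} [Group G]

lemma map_mul_left_apply (p : PMF G) (g x : G) : p.map (g * ·) x = p (g⁻¹ * x) := by
  rw [PMF.map_apply, tsum_eq_single (g⁻¹ * x)]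
  · simp
  · intro y hy
    rw [if_neg]
    rintro rfl
    exact hy (by group)

lemma entropy_map_mul_left (p : PMF G) (g : G) : entropy (p.map (g * ·)) = entropy p := by
  rw [entropy, entropy, ← (Equiv.mulLeft g).tsum_eq]
  simp only [map_mul_left_apply, Equiv.coe_mulLeft, inv_mul_cancel_left]

lemma toOuterMeasure_map_mul_left_smul (p : PMF G) (g : G) (s : Set G) :
    (p.map (g * ·)).toOuterMeasure (g • s) = p.toOuterMeasure s := by
  rw [PMF.toOuterMeasure_map_apply]
  change p.toOuterMeasure ((fun x => g • x) ⁻¹' (g • s)) = _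
  rw [Set.preimage_smul, inv_smul_smul]

lemma conv_pure_one (p : PMF G) : conv p (PMF.pure 1) = p := by
  simp [conv, PMF.pure_map, PMF.bind_pure]

lemma pure_one_conv (p : PMF G) : conv (PMF.pure 1) p = p := by
  simp only [conv, PMF.pure_bind, one_mul]
  exact PMF.map_id p

lemma conv_assoc (p q r : PMF G) : conv (conv p q) r = conv p (conv q r) := by
  simp only [conv, PMF.bind_bind, PMF.bind_map, PMF.map_bind, PMF.map_comp, Function.comp_def,
    mul_assoc]

lemma conv_convPow (μ : PMF G) (n : ℕ) : conv μ (convPow μ n) = convPow μ (n + 1) := by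
  induction n with
  | zero => simp [convPow, conv_pure_one, pure_one_conv]
  | succ n ih =>
    change conv μ (conv (convPow μ n) μ) = conv (convPow μ (n + 1)) μ
    rw [← conv_assoc, ih]

theorem le_entropy_conv (p q : PMF G) (g : G) :
    p g * PMF.klDiv (q.map (g * ·)) (conv p q) + entropy q ≤ entropy (conv p q) := by
  have h := PMF.entropy_bind p fun a => q.map (a * ·)
  simp only [entropy_map_mul_left, mul_add, ENNReal.tsum_add, ENNReal.tsum_mul_right,
    p.tsum_coe, one_mul] at h
  rw [conv, h]
  gcongr
  exact ENNReal.le_tsum (f := fun a => p a * PMF.klDiv _ _) g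

lemma toReal_mul_sq_l1Dist_le_entropy_conv_sub (p q : PMF G) {g : G} (hg : p g ≠ 0)
    (hfin : entropy (conv p q) ≠ ⊤) :
    (p g).toReal * PMF.l1Dist (q.map (g * ·)) (conv p q) ^ 2 ≤
      4 * ((entropy (conv p q)).toReal - (entropy q).toReal) := by
  have hle := le_entropy_conv p q g
  set K := PMF.klDiv (q.map (g * ·)) (conv p q)
  have hpK : p g * K ≠ ⊤ := ne_top_of_le_ne_top hfin (le_self_add.trans hle)
  have hq : entropy q ≠ ⊤ := ne_top_of_le_ne_top hfin (le_add_self.trans hle)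
  have hK : K ≠ ⊤ := fun h => hpK (by rw [h, ENNReal.mul_top hg])
  have hreal : (p g).toReal * K.toReal + (entropy q).toReal ≤ (entropy (conv p q)).toReal := by
    rw [← ENNReal.toReal_mul, ← ENNReal.toReal_add hpK hq]
    exact ENNReal.toReal_mono hfin hle
  have hl1 : PMF.l1Dist (q.map (g * ·)) (conv p q) ^ 2 ≤ 4 * K.toReal :=
    PMF.sq_l1Dist_le_klDiv _ _
      (fun x => PMF.apply_eq_zero_of_bind_apply_eq_zero (f := fun a => q.map (a * ·)) hg) hK
  nlinarith [mul_le_mul_of_nonneg_left hl1 (ENNReal.toReal_nonneg : 0 ≤ (p g).toReal)]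

lemma entropy_convPow_le_succ (μ : PMF G) (n : ℕ) :
    entropy (convPow μ n) ≤ entropy (convPow μ (n + 1)) := by
  rw [← conv_convPow]
  exact le_add_self.trans (le_entropy_conv μ _ 1)

lemma entropy_convPow_ne_top {μ : PMF G}
    (h : Tendsto (fun n : ℕ => entropy (convPow μ n) / n) atTop (𝓝 0)) (n : ℕ) :
    entropy (convPow μ n) ≠ ⊤ := by
  obtain ⟨N, hN, hnN⟩ := ((h.eventually (gt_mem_nhds one_pos)).and (eventually_ge_atTop n)).exists
  refine ne_top_of_le_ne_top (fun htop => ?_)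
    (monotone_nat_of_le_succ (entropy_convPow_le_succ μ) hnN)
  rw [htop, ENNReal.top_div_of_ne_top (ENNReal.natCast_ne_top N)] at hN
  exact not_top_lt hN

lemma abs_sum_toOuterMeasure_smul_sub_le (p : ℕ → PMF G) (g : G)
    (s : Set G) (N : ℕ) :
    |∑ n ∈ Finset.range N, ((p n).toOuterMeasure (g • s)).toReal -
        ∑ n ∈ Finset.range N, ((p n).toOuterMeasure s).toReal| ≤
      1 + ∑ n ∈ Finset.range N, PMF.l1Dist ((p n).map (g * ·)) (p (n + 1)) := by
  set f : ℕ → ℝ := fun n => ((p n).toOuterMeasure (g • s)).toReal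
  set e : ℕ → ℝ := fun n => f (n + 1) - (((p n).map (g * ·)).toOuterMeasure (g • s)).toReal
  -- `(p n) s = (g · p n) (g • s)`, so the difference telescopes up to the errors `e n`.
  have hsplit : ∑ n ∈ Finset.range N, f n - ∑ n ∈ Finset.range N, ((p n).toOuterMeasure s).toReal
      = (f 0 - f N) + ∑ n ∈ Finset.range N, e n := by
    simp only [e, toOuterMeasure_map_mul_left_smul, ← Finset.sum_range_sub' f N,
      ← Finset.sum_sub_distrib, ← Finset.sum_add_distrib]
    exact Finset.sum_congr rfl fun n _ => by ring
  have hf : ∀ n, f n ∈ Set.Icc (0 : ℝ) 1 := fun n =>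
    ⟨(p n).isMean_toOuterMeasure.nonneg _, (p n).isMean_toOuterMeasure.le_one _⟩
  have hboundary : |f 0 - f N| ≤ 1 := abs_sub_le_of_nonneg_of_le (hf 0).1 (hf 0).2 (hf N).1 (hf N).2
  have he : ∀ n, |e n| ≤ PMF.l1Dist ((p n).map (g * ·)) (p (n + 1)) := fun n => by
    rw [abs_sub_comm]
    exact PMF.abs_toReal_toOuterMeasure_sub_le_l1Dist _ _ _
  rw [hsplit]
  exact (abs_add_le _ _).trans (add_le_add hboundary
    ((Finset.abs_sum_le_sum_abs _ _).trans (Finset.sum_le_sum fun n _ => he n)))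

end Group

section Amenability

variable {G : Type*} [Group G]

def asymptoticStabilizer (m : ℕ → Set G → ℝ) : Subgroup G where
  carrier := {g | ∀ s : Set G, Tendsto (fun N => m N (g • s) - m N s) atTop (𝓝 0)}
  one_mem' s := by simp
  mul_mem' {g h} hg hh s := by
    simpa [mul_smul] using (hg (h • s)).add (hh s)
  inv_mem' {g} hg s := by
    simpa using (hg (g⁻¹ • s)).neg

theorem amenable_of_asymptoticStabilizer_eq_top {m : ℕ → Set G → ℝ}
    (hm : ∀ᶠ N in atTop, IsMean (m N)) (hinv : asymptoticStabilizer m = ⊤) : Amenable G := by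
  let U := Ultrafilter.of (atTop : Filter ℕ)
  have hU : (U : Filter ℕ) ≤ atTop := Ultrafilter.of_le _
  have hmU : ∀ᶠ N in (U : Filter ℕ), IsMean (m N) := hU hm
  have hlim : ∀ s, ∃ L, Tendsto (fun N => m N s) U (𝓝 L) := fun s => by
    obtain ⟨L, -, hL⟩ := isCompact_Icc.ultrafilter_le_nhds (U.map fun N => m N s)
      (le_principal_iff.2 (hmU.mono fun N hN => ⟨hN.nonneg s, hN.le_one s⟩))
    exact ⟨L, hL⟩
  choose ν hν using hlim
  refine ⟨ν, ?_, fun s => ?_, fun s t hst => ?_, fun g s => ?_⟩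
  · exact tendsto_nhds_unique (hν _)
      (tendsto_const_nhds.congr' (hmU.mono fun N hN => hN.apply_univ.symm))
  · exact ge_of_tendsto (hν s) (hmU.mono fun N hN => hN.nonneg s)
  · exact tendsto_nhds_unique (hν _)
      (((hν s).add (hν t)).congr' (hmU.mono fun N hN => (hN.apply_union s t hst).symm))
  · have hg : g ∈ asymptoticStabilizer m := hinv ▸ Subgroup.mem_top g
    have := ((hg s).mono_left hU).add (hν s)
    rw [zero_add] at this
    exact tendsto_nhds_unique (hν _) (this.congr fun N => sub_add_cancel _ _)

end Amenability

theorem amenable_of_vanishing_asymptotic_entropy_general {G : Type*} [Group G]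
    (μ : PMF G)
    (hnd : Subgroup.closure μ.support = ⊤)
    (h : Filter.Tendsto (fun n : ℕ => entropy (convPow μ n) / (n : ℝ≥0∞))
      Filter.atTop (nhds 0)) :
    Amenable G := by
  set H : ℕ → ℝ := fun n => (entropy (convPow μ n)).toReal
  have hH : Tendsto (fun N : ℕ => H N / N) atTop (𝓝 0) := by
    refine ((ENNReal.tendsto_toReal ENNReal.zero_ne_top).comp h).congr fun N => ?_
    simp [H, ENNReal.toReal_div]
  refine amenable_of_asymptoticStabilizer_eq_top
    (m := fun N s => (∑ n ∈ Finset.range N, ((convPow μ n).toOuterMeasure s).toReal) / N)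
    ((eventually_ne_atTop 0).mono fun N hN =>
      isMean_cesaro (fun n => (convPow μ n).isMean_toOuterMeasure) hN) ?_
  rw [eq_top_iff, ← hnd, Subgroup.closure_le]
  intro g hg s
  have hstep : ∀ n, (μ g).toReal / 4 *
      PMF.l1Dist ((convPow μ n).map (g * ·)) (convPow μ (n + 1)) ^ 2 ≤ H (n + 1) - H n :=
    fun n => by
      have := toReal_mul_sq_l1Dist_le_entropy_conv_sub μ (convPow μ n) hg
      rw [conv_convPow] at this
      linarith [this (entropy_convPow_ne_top h (n + 1))]
  have hd := tendsto_cesaro_of_mul_sq_le_sub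
    (div_pos (ENNReal.toReal_pos hg (μ.apply_ne_top g)) four_pos) hstep hH
  refine squeeze_zero_norm (fun N => ?_)
    (by simpa only [add_zero] using (tendsto_const_div_atTop_nhds_zero_nat (1 : ℝ)).add hd)
  rw [← sub_div, norm_div, Real.norm_natCast, ← add_div, Real.norm_eq_abs]
  exact div_le_div_of_nonneg_right (abs_sum_toOuterMeasure_smul_sub_le _ g s N) N.cast_nonneg

/-- **Entropy criterion of amenability** (Kaimanovich–Vershik). If a countable
group `G` carries a non-degenerate probability measure `μ` of finite entropy
whose asymptotic entropy `h(G,μ) = lim H(μ^n)/n` vanishes, then `G` is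
amenable. -/
theorem amenable_of_vanishing_asymptotic_entropy {G : Type*} [Group G]
    [Countable G] (μ : PMF G)
    (hnd : Subgroup.closure μ.support = ⊤)
    (hfin : entropy μ ≠ ⊤)
    (h : Filter.Tendsto (fun n : ℕ => entropy (convPow μ n) / (n : ℝ≥0∞))
      Filter.atTop (nhds 0)) :
    Amenable G :=
  amenable_of_vanishing_asymptotic_entropy_general μ hnd h
end

section
/- An automatic automorphism α of the rooted tree T(X) is bounded if and only if either α is finitary, or there exists an integer m ≥ 0 such that every non-finitary state α_w with w ∈ X^m is directed. -/
open List

/-! ### The automorphism group of the rooted tree `T(X)` -/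

/-- A permutation of the vertex set `X*` of the rooted tree `T(X)` is a tree
automorphism iff it preserves the length of words and the prefix relation. -/
def IsTreeAut {X : Type*} (f : Equiv.Perm (List X)) : Prop :=
  (∀ w : List X, (f w).length = w.length) ∧
    ∀ u v : List X, u <+: v → f u <+: f v

/-- The automorphism group `Aut(T(X))` of the rooted tree `T(X)`, realized as a
subgroup of the permutation group of the vertex set `X*`. -/
def treeAut (X : Type*) : Subgroup (Equiv.Perm (List X)) where
  carrier := {f | IsTreeAut f}
  one_mem' := ⟨fun _ => rfl, fun _ _ h => h⟩
  mul_mem' := by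
    rintro f g ⟨hf1, hf2⟩ ⟨hg1, hg2⟩
    refine ⟨fun w => ?_, fun u v h => ?_⟩
    · simp only [Equiv.Perm.coe_mul, Function.comp_apply]
      rw [hf1, hg1]
    · simpa using hf2 _ _ (hg2 _ _ h)
  inv_mem' := by
    rintro f ⟨hf1, hf2⟩
    have hlen : ∀ w : List X, (f⁻¹ w).length = w.length := by
      intro w
      have h := hf1 (f⁻¹ w)
      rw [(Equiv.Perm.eq_inv_iff_eq.mp rfl : f (f⁻¹ _) = _)] at h
      exact h.symm
    refine ⟨hlen, fun u v h => ?_⟩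
    set t := (f⁻¹ v).take (f⁻¹ u).length with ht
    have htp : t <+: f⁻¹ v := take_prefix _ _
    have h2 : f t <+: v := by
      have := hf2 _ _ htp
      rwa [(Equiv.Perm.eq_inv_iff_eq.mp rfl : f (f⁻¹ _) = _)] at this
    have hlt : (f t).length = u.length := by
      rw [hf1, ht, length_take, hlen, hlen]
      exact min_eq_left h.length_le
    have hfu : f t = u :=
      (prefix_of_prefix_length_le h2 h hlt.le).eq_of_length hlt
    have : t = f⁻¹ u := by
      rw [← hfu, (Equiv.Perm.inv_eq_iff_eq.mpr rfl : f⁻¹ (f _) = _)]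
    rwa [this] at htp

lemma mem_treeAut {X : Type*} {f : Equiv.Perm (List X)} :
    f ∈ treeAut X ↔ IsTreeAut f := Iff.rfl

/-! ### States, automatic and bounded automorphisms -/

/-- The state (section/restriction) of `f` at the vertex `w` of the tree:
`f (w ++ v) = f w ++ state f w v` for a tree automorphism `f`. -/
def state {X : Type*} (f : List X → List X) (w : List X) : List X → List X :=
  fun v => (f (w ++ v)).drop w.length

/-- An endomorphism of `X*` is automatic if it has only finitely many states. -/
def IsAutomatic {X : Type*} (f : List X → List X) : Prop :=
  (Set.range fun w : List X => state f w).Finite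

/-- An endomorphism of `X*` is bounded if the number of words of length `n`
with non-trivial state is bounded uniformly in `n`. -/
def IsBounded {X : Type*} (f : List X → List X) : Prop :=
  ∃ C : ℕ, ∀ n : ℕ,
    {w : List X | w.length = n ∧ state f w ≠ id}.ncard ≤ C

lemma IsTreeAut.apply_append {X : Type*} {f : Equiv.Perm (List X)}
    (hf : IsTreeAut f) (w v : List X) :
    f (w ++ v) = f w ++ state (⇑f) w v := by
  obtain ⟨t, ht⟩ := hf.2 w (w ++ v) (prefix_append w v)
  have hl : (f w).length = w.length := hf.1 w
  have hst : state (⇑f) w v = t := by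
    unfold state
    rw [← ht, ← hl, List.drop_left]
  rw [hst, ht]

lemma state_one {X : Type*} (w : List X) :
    state (⇑(1 : Equiv.Perm (List X))) w = id := by
  funext v
  simp [state]

lemma state_mul {X : Type*} {f g : Equiv.Perm (List X)}
    (hf : IsTreeAut f) (hg : IsTreeAut g) (w : List X) :
    state (⇑(f * g)) w = state (⇑f) (g w) ∘ state (⇑g) w := by
  funext v
  have h1 : (⇑(f * g)) (w ++ v) = f (g (w ++ v)) := rfl
  show ((f * g) (w ++ v)).drop w.length = _
  rw [h1, hg.apply_append, hf.apply_append]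
  have hl : (f (g w)).length = w.length := by rw [hf.1, hg.1]
  rw [← hl, List.drop_left]
  rfl

lemma state_inv_comp {X : Type*} {f : Equiv.Perm (List X)}
    (hf : IsTreeAut f) (hfi : IsTreeAut f⁻¹) (u : List X) :
    state (⇑f⁻¹) u ∘ state (⇑f) (f⁻¹ u) = id ∧
      state (⇑f) (f⁻¹ u) ∘ state (⇑f⁻¹) u = id := by
  constructor
  · funext v
    have h1 : f (f⁻¹ u ++ v) = u ++ state (⇑f) (f⁻¹ u) v := by
      rw [hf.apply_append, (Equiv.Perm.eq_inv_iff_eq.mp rfl : f (f⁻¹ _) = _)]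
    have h2 : f⁻¹ (u ++ state (⇑f) (f⁻¹ u) v)
        = f⁻¹ u ++ state (⇑f⁻¹) u (state (⇑f) (f⁻¹ u) v) := hfi.apply_append _ _
    rw [← h1, (Equiv.Perm.inv_eq_iff_eq.mpr rfl : f⁻¹ (f _) = _)] at h2
    simp only [Function.comp_apply, id_eq]
    exact (List.append_cancel_left h2).symm
  · funext v
    have h1 : f⁻¹ (u ++ v) = f⁻¹ u ++ state (⇑f⁻¹) u v := hfi.apply_append _ _
    have h2 : f (f⁻¹ u ++ state (⇑f⁻¹) u v)
        = f (f⁻¹ u) ++ state (⇑f) (f⁻¹ u) (state (⇑f⁻¹) u v) := hf.apply_append _ _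
    rw [← h1, (Equiv.Perm.eq_inv_iff_eq.mp rfl : f (f⁻¹ _) = _), (Equiv.Perm.eq_inv_iff_eq.mp rfl : f (f⁻¹ _) = _)] at h2
    simp only [Function.comp_apply, id_eq]
    exact (List.append_cancel_left h2).symm

/-- An endomorphism of `X*` is finitary if all its states at sufficiently deep
levels are trivial. -/
def IsFinitary {X : Type*} (f : List X → List X) : Prop :=
  ∃ n₀ : ℕ, ∀ w : List X, n₀ ≤ w.length → state f w = id

/-- An endomorphism of `X*` is directed if for some `l ≥ 1` there is a word
`w₀` of length `l` with state equal to the endomorphism itself, all the other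
states at level `l` being finitary. -/
def IsDirectedAut {X : Type*} (f : List X → List X) : Prop :=
  ∃ l : ℕ, 1 ≤ l ∧ ∃ w₀ : List X, w₀.length = l ∧ state f w₀ = f ∧
    ∀ w : List X, w.length = l → w ≠ w₀ → IsFinitary (state f w)

/-!
Let `A n` be the set of words of length `n` with non-finitary state. Since `X` is finite, every
non-finitary state has a non-finitary child, so truncation maps `A (n + 1)` onto `A n`. If `α` is
bounded, the sizes of the `A n` are bounded, hence eventually constant, and from some depth `m₀`
on truncation is a bijection: below every vertex of depth at least `m₀` each level carries at
most one non-finitary state. As `α` has only finitely many states, every word of length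
`m₀ + #states` has two prefixes of length at least `m₀` with the same state; the word `t`
between them makes the non-finitary branch periodic, and the state at the end is directed.

Conversely, finitary and directed automorphisms are bounded (below a directed one, all deep
nontrivial states lie under the recurrent word, so level `n` has no more of them than level
`n - l`), and an automorphism whose states at one level are all bounded is bounded.
-/

section

open Set
open Filter (atTop eventually_atTop eventually_all eventually_all_finite
  eventually_imp_distrib_left tendsto_add_atTop_nat tendsto_pure)

variable {X : Type*}

lemma state_append (f : List X → List X) (w v : List X) :
    state f (w ++ v) = state (state f w) v := by
  funext u
  simp only [state, append_assoc, drop_drop, length_append]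

lemma state_id (w : List X) : state (id : List X → List X) w = id := by
  funext v
  simp [state]

lemma isFinitary_id : IsFinitary (id : List X → List X) :=
  ⟨0, fun w _ => state_id w⟩

lemma IsFinitary.state {f : List X → List X} (hf : IsFinitary f) (w : List X) :
    IsFinitary (state f w) := by
  obtain ⟨n₀, h⟩ := hf
  refine ⟨n₀, fun v hv => ?_⟩
  rw [← state_append]
  exact h _ (hv.trans (by simp))

lemma not_isFinitary_state_of_append {f : List X → List X} {w v : List X}
    (h : ¬IsFinitary (state f (w ++ v))) : ¬IsFinitary (state f w) := fun hw =>
  h (state_append f w v ▸ hw.state v)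

lemma isFinitary_iff_eventually {f : List X → List X} :
    IsFinitary f ↔ ∀ᶠ n in atTop, ∀ w : List X, n ≤ w.length → state f w = id := by
  rw [eventually_atTop]
  exact ⟨fun ⟨n₀, h⟩ => ⟨n₀, fun _ hn w hw => h w (hn.trans hw)⟩,
    fun ⟨n₀, h⟩ => ⟨n₀, h n₀ le_rfl⟩⟩

lemma exists_not_isFinitary_state_singleton [Finite X] {f : List X → List X}
    (hf : ¬IsFinitary f) : ∃ x : X, ¬IsFinitary (state f [x]) := by
  contrapose! hf
  obtain ⟨n₀, h⟩ := eventually_atTop.1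
    (eventually_all.2 fun x => isFinitary_iff_eventually.1 (hf x))
  refine ⟨n₀ + 1, fun w hw => ?_⟩
  obtain ⟨x, v, rfl⟩ := exists_cons_of_length_pos (by omega : 0 < w.length)
  rw [← singleton_append, state_append]
  exact h n₀ le_rfl x v (by simpa using hw)

def nontrivialWords (f : List X → List X) (n : ℕ) : Set (List X) :=
  {w | w.length = n ∧ state f w ≠ id}

lemma finite_nontrivialWords [Finite X] (f : List X → List X) (n : ℕ) :
    (nontrivialWords f n).Finite :=
  (finite_length_eq X n).subset fun _ hw => hw.1

lemma isBounded_iff_eventually {f : List X → List X} :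
    IsBounded f ↔ ∀ᶠ C in atTop, ∀ n, (nontrivialWords f n).ncard ≤ C := by
  rw [eventually_atTop]
  exact ⟨fun ⟨C, h⟩ => ⟨C, fun _ hC n => (h n).trans hC⟩, fun ⟨C, h⟩ => ⟨C, h C le_rfl⟩⟩

lemma IsFinitary.isBounded [Finite X] {f : List X → List X} (hf : IsFinitary f) :
    IsBounded f := by
  obtain ⟨n₀, h⟩ := hf
  refine ⟨{u : List X | u.length < n₀}.ncard, fun n => ncard_le_ncard ?_ (finite_length_lt X n₀)⟩
  exact fun u hu => not_le.1 fun hn₀ => hu.2 (h u hn₀)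

lemma isBounded_of_forall_isBounded_state [Finite X] {f : List X → List X} {m : ℕ}
    (h : ∀ w : List X, w.length = m → IsBounded (state f w)) : IsBounded f := by
  obtain ⟨C, hC⟩ := eventually_atTop.1 ((eventually_all_finite (finite_length_eq X m)).2
    fun w hw => isBounded_iff_eventually.1 (h w hw))
  set T := (finite_length_eq X m).toFinset
  have hT : ∀ w, w ∈ T ↔ w.length = m := by simp [T]
  refine ⟨{u : List X | u.length < m}.ncard + T.card * C, fun n => ?_⟩
  rcases lt_or_ge n m with hn | hn
  · exact (ncard_le_ncard (fun u hu => hu.1.trans_lt hn) (finite_length_lt X m)).trans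
      (Nat.le_add_right _ _)
  have hsub : nontrivialWords f n ⊆
      ⋃ w ∈ T, (w ++ ·) '' nontrivialWords (state f w) (n - m) := by
    rintro u ⟨hu, hnt⟩
    refine mem_biUnion (x := u.take m) ((hT _).2 (by rw [length_take]; omega))
      ⟨u.drop m, ⟨by rw [length_drop]; omega, ?_⟩, take_append_drop m u⟩
    rwa [← state_append, take_append_drop]
  calc (nontrivialWords f n).ncard
      ≤ (⋃ w ∈ T, (w ++ ·) '' nontrivialWords (state f w) (n - m)).ncard :=
        ncard_le_ncard hsub (T.finite_toSet.biUnion fun w _ =>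
          (finite_nontrivialWords _ _).image _)
    _ ≤ ∑ w ∈ T, ((w ++ ·) '' nontrivialWords (state f w) (n - m)).ncard :=
        T.set_ncard_biUnion_le _
    _ ≤ ∑ _w ∈ T, C := Finset.sum_le_sum fun w hw =>
        (ncard_image_le (finite_nontrivialWords _ _)).trans
          (hC C le_rfl w ((hT w).1 hw) (n - m))
    _ ≤ _ := by simp

lemma IsDirectedAut.isBounded [Finite X] {f : List X → List X} (hf : IsDirectedAut f) :
    IsBounded f := by
  obtain ⟨_, hl, w₀, rfl, hw₀, hfin⟩ := hf
  obtain ⟨N, hN⟩ := eventually_atTop.1 ((eventually_all_finite (finite_length_eq X w₀.length)).2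
    fun w hw => eventually_imp_distrib_left.2 fun hne =>
      isFinitary_iff_eventually.1 (hfin w hw hne))
  -- beyond depth `|w₀| + N` all nontrivial states lie below `w₀`, where the state is `f` again
  have hshift : ∀ n, w₀.length + N ≤ n →
      (nontrivialWords f n).ncard ≤ (nontrivialWords f (n - w₀.length)).ncard := by
    intro n hn
    have hsplit : ∀ u ∈ nontrivialWords f n, w₀ ++ u.drop w₀.length = u := by
      rintro u ⟨hu, hnt⟩
      have htake : u.take w₀.length = w₀ := by
        by_contra hne
        refine hnt ?_
        rw [← take_append_drop w₀.length u, state_append]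
        exact hN N le_rfl _ (show length _ = _ by rw [length_take]; omega) hne _
          (by rw [length_drop]; omega)
      conv_rhs => rw [← take_append_drop w₀.length u, htake]
    refine ncard_le_ncard_of_injOn (drop w₀.length) (fun u hu => ⟨by simp [hu.1], ?_⟩)
      (fun u hu v hv huv => ?_) (finite_nontrivialWords _ _)
    · rw [← hw₀, ← state_append, hsplit u hu]
      exact hu.2
    · rw [← hsplit u hu, ← hsplit v hv, huv]
  refine ⟨{u : List X | u.length < w₀.length + N}.ncard, fun n => ?_⟩
  induction n using Nat.strong_induction_on with
  | _ n ih =>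
    rcases lt_or_ge n (w₀.length + N) with hn | hn
    · exact ncard_le_ncard (fun u hu => hu.1.trans_lt hn) (finite_length_lt X _)
    · exact (hshift n hn).trans (ih _ (by omega))

def nonFinitaryWords (f : List X → List X) (n : ℕ) : Set (List X) :=
  {w | w.length = n ∧ ¬IsFinitary (state f w)}

lemma nonFinitaryWords_subset_nontrivialWords (f : List X → List X) (n : ℕ) :
    nonFinitaryWords f n ⊆ nontrivialWords f n :=
  fun _ hw => ⟨hw.1, fun h => hw.2 (h ▸ isFinitary_id)⟩

lemma finite_nonFinitaryWords [Finite X] (f : List X → List X) (n : ℕ) :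
    (nonFinitaryWords f n).Finite :=
  (finite_length_eq X n).subset fun _ hw => hw.1

lemma mapsTo_take_nonFinitaryWords (f : List X → List X) (n : ℕ) :
    MapsTo (take n) (nonFinitaryWords f (n + 1)) (nonFinitaryWords f n) := by
  rintro u ⟨hu, hnf⟩
  refine ⟨by simp [hu], not_isFinitary_state_of_append (v := u.drop n) ?_⟩
  rwa [take_append_drop]

lemma surjOn_take_nonFinitaryWords [Finite X] (f : List X → List X) (n : ℕ) :
    SurjOn (take n) (nonFinitaryWords f (n + 1)) (nonFinitaryWords f n) := by
  rintro w ⟨hw, hnf⟩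
  obtain ⟨x, hx⟩ := exists_not_isFinitary_state_singleton hnf
  exact ⟨w ++ [x], ⟨by simp [hw], by rwa [state_append]⟩, by simp [← hw]⟩

lemma monotone_ncard_nonFinitaryWords [Finite X] (f : List X → List X) :
    Monotone fun n => (nonFinitaryWords f n).ncard :=
  monotone_nat_of_le_succ fun n =>
    (ncard_le_ncard (surjOn_take_nonFinitaryWords f n)
      ((finite_nonFinitaryWords f (n + 1)).image _)).trans
      (ncard_image_le (finite_nonFinitaryWords f (n + 1)))

lemma IsBounded.eventually_injOn_take [Finite X] {f : List X → List X} (hf : IsBounded f) :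
    ∀ᶠ n in atTop, InjOn (take n) (nonFinitaryWords f (n + 1)) := by
  obtain ⟨C, hC⟩ := hf
  have hbdd : BddAbove (range fun n => (nonFinitaryWords f n).ncard) :=
    ⟨C, forall_mem_range.2 fun n => (ncard_le_ncard (nonFinitaryWords_subset_nontrivialWords f n)
      (finite_nontrivialWords f n)).trans (hC n)⟩
  -- bounded and monotone, the counts are eventually constant, so the surjection `take n` is
  -- eventually a bijection
  have hconst := tendsto_atTop_ciSup (monotone_ncard_nonFinitaryWords f) hbdd
  rw [nhds_discrete, tendsto_pure] at hconst
  filter_upwards [hconst, (tendsto_add_atTop_nat 1).eventually hconst] with n hn hn1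
  exact fun u hu v hv huv => inj_on_of_surj_on_of_ncard_le (fun u _ => u.take n)
    (fun u hu => mapsTo_take_nonFinitaryWords f n hu)
    (fun w hw => (surjOn_take_nonFinitaryWords f n hw).imp fun _ h => ⟨h.1, h.2⟩)
    (hn1.trans hn.symm).le hu hv huv (finite_nonFinitaryWords f _)

lemma IsBounded.exists_subsingleton_nonFinitaryWords_state [Finite X] {f : List X → List X}
    (hf : IsBounded f) :
    ∃ m₀, ∀ u : List X, m₀ ≤ u.length → ∀ k, (nonFinitaryWords (state f u) k).Subsingleton := by
  obtain ⟨m₀, hinj⟩ := eventually_atTop.1 hf.eventually_injOn_take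
  refine ⟨m₀, fun u hu k => ?_⟩
  induction k generalizing u with
  | zero =>
    rintro v ⟨hv, -⟩ v' ⟨hv', -⟩
    rw [length_eq_zero_iff] at hv hv'
    rw [hv, hv']
  | succ k ih =>
    rintro _ ⟨hv, hvnf⟩ _ ⟨hv', hvnf'⟩
    obtain ⟨x, v, rfl⟩ := exists_cons_of_length_eq_add_one hv
    obtain ⟨x', v', rfl⟩ := exists_cons_of_length_eq_add_one hv'
    have hchild : ∀ y w, ¬IsFinitary (state (state f u) (y :: w)) →
        u ++ [y] ∈ nonFinitaryWords f (u.length + 1) := fun y w h =>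
      ⟨by simp, not_isFinitary_state_of_append (v := w) (by rwa [append_assoc, state_append])⟩
    obtain rfl : x = x' := by
      simpa using hinj u.length hu (hchild x v hvnf) (hchild x' v' hvnf') (by simp)
    have hgrand : ∀ w, state (state f (u ++ [x])) w = state (state f u) (x :: w) := fun w => by
      rw [state_append, ← state_append, singleton_append]
    have hvv : v = v' := ih (u ++ [x]) (by rw [length_append]; omega)
      (show v ∈ _ from ⟨by simpa using hv, by rwa [hgrand]⟩)
      (show v' ∈ _ from ⟨by simpa using hv', by rwa [hgrand]⟩)
    rw [hvv]

lemma subsingleton_nonFinitaryWords_state {g : List X → List X}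
    (hg : ∀ k, (nonFinitaryWords g k).Subsingleton) (r : List X) (k : ℕ) :
    (nonFinitaryWords (state g r) k).Subsingleton := fun v hv v' hv' =>
  append_cancel_left <| hg (r.length + k)
    (show r ++ v ∈ _ from ⟨by simp [hv.1], by rw [state_append]; exact hv.2⟩)
    (show r ++ v' ∈ _ from ⟨by simp [hv'.1], by rw [state_append]; exact hv'.2⟩)

lemma isDirectedAut_of_state_eq {g : List X → List X} {w₀ : List X}
    (hg : ∀ k, (nonFinitaryWords g k).Subsingleton) (hw₀ : w₀ ≠ []) (hrec : state g w₀ = g) :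
    IsDirectedAut g := by
  refine ⟨w₀.length, length_pos_iff.2 hw₀, w₀, rfl, hrec, fun w hw hne => ?_⟩
  by_contra hw'
  have hgnf : ¬IsFinitary g := fun h => hw' (h.state w)
  exact hne (hg _ ⟨hw, hw'⟩ ⟨rfl, hrec.symm ▸ hgnf⟩)

lemma isDirectedAut_state_of_state_eq {g : List X → List X} {t r : List X}
    (hg : ∀ k, (nonFinitaryWords g k).Subsingleton) (ht : t ≠ []) (hrec : state g t = g)
    (hr : ¬IsFinitary (state g r)) : IsDirectedAut (state g r) := by
  -- `r` and `t ++ r` both lie on the unique non-finitary branch of `g`,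
  -- so `r` is a prefix of `t ++ r`
  have hstate : state g (t ++ r) = state g r := by rw [state_append, hrec]
  have hprefix : (t ++ r).take r.length = r := by
    refine hg r.length ⟨by simp, not_isFinitary_state_of_append (v := (t ++ r).drop r.length) ?_⟩
      ⟨rfl, hr⟩
    rwa [take_append_drop, hstate]
  refine isDirectedAut_of_state_eq (w₀ := (t ++ r).drop r.length)
    (subsingleton_nonFinitaryWords_state hg r) ?_ ?_
  · rw [← length_pos_iff] at ht ⊢
    simp only [length_drop, length_append, Nat.add_sub_cancel]
    omega
  · rw [← state_append, ← hstate]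
    conv_rhs => rw [← take_append_drop r.length (t ++ r), hprefix]

lemma exists_append_append_eq_of_finite_range {β : Type*} {F : List X → β}
    (hF : (range F).Finite) (m₀ : ℕ) {u : List X} (hu : m₀ + (range F).ncard ≤ u.length) :
    ∃ a t r, a ++ t ++ r = u ∧ m₀ ≤ a.length ∧ t ≠ [] ∧ F (a ++ t) = F a := by
  obtain ⟨i, hi, j, hj, hij, heq⟩ := exists_ne_map_eq_of_ncard_lt_of_maps_to
    (s := ↑(Finset.range ((range F).ncard + 1))) (f := fun i => F (u.take (m₀ + i)))
    (by simp) (fun i _ => mem_range_self _) hF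
  simp only [Finset.coe_range, mem_Iio] at hi hj
  wlog hlt : i < j generalizing i j
  · exact this j i hij.symm heq.symm hj hi (by omega)
  have hsplit : u.take (m₀ + i) ++ (u.take (m₀ + j)).drop (m₀ + i) = u.take (m₀ + j) := by
    conv_rhs => rw [← take_append_drop (m₀ + i) (u.take (m₀ + j)), take_take,
      Nat.min_eq_left (by omega)]
  refine ⟨u.take (m₀ + i), (u.take (m₀ + j)).drop (m₀ + i), u.drop (m₀ + j),
    by rw [hsplit, take_append_drop], by rw [length_take]; omega, ?_,
    by rw [hsplit]; exact heq.symm⟩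
  rw [← length_pos_iff, length_drop, length_take]
  omega

lemma IsBounded.exists_forall_isDirectedAut_state [Finite X] {f : List X → List X}
    (hb : IsBounded f) (haut : IsAutomatic f) :
    ∃ m, ∀ w : List X, w.length = m → ¬IsFinitary (state f w) → IsDirectedAut (state f w) := by
  obtain ⟨m₀, hthin⟩ := hb.exists_subsingleton_nonFinitaryWords_state
  refine ⟨m₀ + (range (state f)).ncard, fun u hu hnf => ?_⟩
  obtain ⟨a, t, r, rfl, ha, ht, hrec⟩ := exists_append_append_eq_of_finite_range haut m₀ hu.ge
  rw [state_append, hrec] at hnf ⊢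
  exact isDirectedAut_state_of_state_eq (hthin a ha) ht (by rwa [← state_append]) hnf

end

theorem bounded_iff_directed_states_general {X : Type*} [Finite X]
    (α : Equiv.Perm (List X)) (haut : IsAutomatic ⇑α) :
    IsBounded ⇑α ↔
      (IsFinitary ⇑α ∨ ∃ m : ℕ, ∀ w : List X, w.length = m →
        ¬ IsFinitary (state (⇑α) w) → IsDirectedAut (state (⇑α) w)) := by
  refine ⟨fun hb => Or.inr (hb.exists_forall_isDirectedAut_state haut), ?_⟩
  rintro (hfin | ⟨m, hm⟩)
  · exact hfin.isBounded
  · refine isBounded_of_forall_isBounded_state (m := m) fun w hw => ?_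
    by_cases hf : IsFinitary (state (⇑α) w)
    exacts [hf.isBounded, (hm w hw hf).isBounded]

/-- (Sidki) An automatic automorphism is bounded if and only if it is either
finitary, or all its non-finitary states at some level `m` are directed. -/
theorem bounded_iff_directed_states {X : Type*} [Finite X]
    (α : Equiv.Perm (List X)) (hα : α ∈ treeAut X) (haut : IsAutomatic ⇑α) :
    IsBounded ⇑α ↔
      (IsFinitary ⇑α ∨ ∃ m : ℕ, ∀ w : List X, w.length = m →
        ¬ IsFinitary (state (⇑α) w) → IsDirectedAut (state (⇑α) w)) :=
  bounded_iff_directed_states_general α haut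
end

section
/- If m is a probability measure on a countable set X and (π_i : X → X_i)_{i∈I} is a countable family of maps which separates the points of X (i.e., x = y whenever π_i(x) = π_i(y) for all i), then the entropies satisfy H(m) ≤ ∑_{i∈I} H(π_i m), where π_i m is the image (pushforward) measure of m under π_i. -/
open List

/-! ### Entropy, convolutions and random walks -/

open scoped ENNReal

/-! Put `T x = ∑ᵢ -log (πᵢ m)(πᵢ x)`, so that `∑ᵢ H(πᵢ m) = ∑ₓ m(x) T(x)`. Gibbs' inequality
gives `H(m) ≤ ∑ₓ m(x) T(x)` as soon as every finite `F ⊆ X` carries some `q` with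
`∑_{x ∈ F} q(x) ≤ 1` and `-log q ≤ T` on `F`, since all the sums involved are suprema of finite
sums. Finitely many `πᵢ`, `i ∈ s`, already separate the points of `F`, and
`q(x) = ∏_{i ∈ s} (πᵢ m)(πᵢ x)` works: its sum over `F` is the mass of the injective image of `F`
under the product measure `⊗_{i ∈ s} πᵢ m`. -/

open Real in
lemma negMulLog_add_le_mul_neg_log_add {a b : ℝ} (ha : 0 < a) (hb : 0 < b) :
    negMulLog a + a ≤ a * -log b + b := by
  have h := mul_le_mul_of_nonneg_left (log_le_sub_one_of_pos (div_pos hb ha)) ha.le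
  rw [log_div hb.ne' ha.ne', mul_sub_one, mul_div_cancel₀ _ ha.ne'] at h
  rw [negMulLog]
  linarith

lemma ENNReal.toReal_le_one_of_le_one {a : ℝ≥0∞} (ha : a ≤ 1) : a.toReal ≤ 1 :=
  ENNReal.toReal_le_of_le_ofReal zero_le_one (by simpa using ha)

lemma neg_log_toReal_nonneg {a : ℝ≥0∞} (ha : a ≤ 1) : 0 ≤ -Real.log a.toReal :=
  neg_nonneg.mpr (Real.log_nonpos ENNReal.toReal_nonneg (ENNReal.toReal_le_one_of_le_one ha))

/-- `-log a ∈ [0, ∞]`, with `-log 0 = ∞`; it is clipped to `0` for `a > 1` (and `negLog ∞ = 0`). -/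
noncomputable def negLog (a : ℝ≥0∞) : ℝ≥0∞ :=
  if a = 0 then ∞ else ENNReal.ofReal (-Real.log a.toReal)

lemma negLog_of_ne_zero {a : ℝ≥0∞} (ha : a ≠ 0) :
    negLog a = ENNReal.ofReal (-Real.log a.toReal) :=
  if_neg ha

lemma negLog_mul {a b : ℝ≥0∞} (ha : a ≤ 1) (hb : b ≤ 1) :
    negLog (a * b) = negLog a + negLog b := by
  rcases eq_or_ne a 0 with rfl | ha0
  · simp [negLog]
  rcases eq_or_ne b 0 with rfl | hb0
  · simp [negLog]
  have hat := ne_top_of_le_ne_top ENNReal.one_ne_top ha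
  have hbt := ne_top_of_le_ne_top ENNReal.one_ne_top hb
  rw [negLog_of_ne_zero (mul_ne_zero ha0 hb0), negLog_of_ne_zero ha0, negLog_of_ne_zero hb0,
    ← ENNReal.ofReal_add (neg_log_toReal_nonneg ha) (neg_log_toReal_nonneg hb),
    ENNReal.toReal_mul, Real.log_mul (ENNReal.toReal_ne_zero.mpr ⟨ha0, hat⟩)
      (ENNReal.toReal_ne_zero.mpr ⟨hb0, hbt⟩), neg_add]

lemma negLog_prod {ι : Type*} (s : Finset ι) (f : ι → ℝ≥0∞) (hf : ∀ i ∈ s, f i ≤ 1) :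
    negLog (∏ i ∈ s, f i) = ∑ i ∈ s, negLog (f i) := by
  classical
  induction s using Finset.induction_on with
  | empty => simp [negLog]
  | insert j s hj ih =>
    rw [Finset.prod_insert hj, Finset.sum_insert hj, negLog_mul (hf j (by simp))
      (Finset.prod_le_one' fun i hi => hf i (by simp [hi])), ih fun i hi => hf i (by simp [hi])]

lemma mul_negLog_eq_ofReal_negMulLog {a : ℝ≥0∞} (ha : a ≠ ∞) :
    a * negLog a = ENNReal.ofReal (Real.negMulLog a.toReal) := by
  rcases eq_or_ne a 0 with rfl | ha0
  · simp
  rw [negLog_of_ne_zero ha0, Real.negMulLog, neg_mul, ← mul_neg,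
    ENNReal.ofReal_mul ENNReal.toReal_nonneg, ENNReal.ofReal_toReal ha]

lemma ofReal_negMulLog_add_le_mul_negLog_add {a b : ℝ≥0∞} (ha : a ≤ 1) (hb : b ≠ ∞) :
    ENNReal.ofReal (Real.negMulLog a.toReal) + a ≤ a * negLog b + b := by
  rcases eq_or_ne a 0 with rfl | ha0
  · simp
  rcases eq_or_ne b 0 with rfl | hb0
  · simp [negLog, ENNReal.mul_top ha0]
  have hat := ne_top_of_le_ne_top ENNReal.one_ne_top ha
  have hreal := negMulLog_add_le_mul_neg_log_add (ENNReal.toReal_pos ha0 hat)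
    (ENNReal.toReal_pos hb0 hb)
  calc ENNReal.ofReal (Real.negMulLog a.toReal) + a
      = ENNReal.ofReal (Real.negMulLog a.toReal + a.toReal) := by
        rw [ENNReal.ofReal_add (Real.negMulLog_nonneg ENNReal.toReal_nonneg
          (ENNReal.toReal_le_one_of_le_one ha)) ENNReal.toReal_nonneg, ENNReal.ofReal_toReal hat]
    _ ≤ ENNReal.ofReal (a.toReal * -Real.log b.toReal + b.toReal) :=
        ENNReal.ofReal_le_ofReal hreal
    _ ≤ ENNReal.ofReal (a.toReal * -Real.log b.toReal) + ENNReal.ofReal b.toReal :=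
        ENNReal.ofReal_add_le
    _ = a * negLog b + b := by
        rw [ENNReal.ofReal_mul ENNReal.toReal_nonneg, ENNReal.ofReal_toReal hat,
          ENNReal.ofReal_toReal hb, negLog_of_ne_zero hb0]

lemma entropy_eq_tsum_mul_negLog {α : Type*} (m : PMF α) :
    entropy m = ∑' x, m x * negLog (m x) :=
  tsum_congr fun x => (mul_negLog_eq_ofReal_negMulLog (m.apply_ne_top x)).symm

theorem entropy_le_tsum_mul_of_forall_finset {X : Type*} (m : PMF X) (T : X → ℝ≥0∞)
    (h : ∀ F : Finset X, ∃ q : X → ℝ≥0∞, ∑ x ∈ F, q x ≤ 1 ∧ ∀ x ∈ F, negLog (q x) ≤ T x) :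
    entropy m ≤ ∑' x, m x * T x := by
  suffices ∑' x, (ENNReal.ofReal (Real.negMulLog (m x).toReal) + m x) ≤ ∑' x, m x * T x + 1 by
    rw [ENNReal.tsum_add, m.tsum_coe, ENNReal.add_le_add_iff_right ENNReal.one_ne_top] at this
    exact this
  rw [ENNReal.tsum_eq_iSup_sum]
  refine iSup_le fun F => ?_
  obtain ⟨q, hq1, hqT⟩ := h F
  have hq_ne_top : ∀ x ∈ F, q x ≠ ∞ := fun x hx =>
    ne_top_of_le_ne_top ENNReal.one_ne_top ((Finset.single_le_sum (by simp) hx).trans hq1)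
  calc ∑ x ∈ F, (ENNReal.ofReal (Real.negMulLog (m x).toReal) + m x)
      ≤ ∑ x ∈ F, (m x * negLog (q x) + q x) := Finset.sum_le_sum fun x hx =>
        ofReal_negMulLog_add_le_mul_negLog_add (m.coe_le_one x) (hq_ne_top x hx)
    _ ≤ ∑ x ∈ F, m x * T x + 1 := by
        rw [Finset.sum_add_distrib]
        gcongr with x hx
        exact hqT x hx
    _ ≤ ∑' x, m x * T x + 1 := by gcongr; exact ENNReal.sum_le_tsum F

lemma PMF.tsum_map_apply_mul {X Y : Type*} (m : PMF X) (f : X → Y) (g : Y → ℝ≥0∞) :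
    ∑' y, m.map f y * g y = ∑' x, m x * g (f x) := by
  calc ∑' y, m.map f y * g y = ∑' y, ∑' x, m x * (PMF.pure (f x) y * g y) := by
        simp_rw [PMF.map, PMF.bind_apply, ← ENNReal.tsum_mul_right, mul_assoc]; rfl
    _ = ∑' x, m x * g (f x) := by
        rw [ENNReal.tsum_comm]
        simp_rw [ENNReal.tsum_mul_left, PMF.pure_apply, ite_mul, one_mul, zero_mul, tsum_ite_eq]

lemma tsum_entropy_map_eq {X ι : Type*} {Y : ι → Type*} (m : PMF X) (π : ∀ i, X → Y i) :
    ∑' i, entropy (m.map (π i)) = ∑' x, m x * ∑' i, negLog (m.map (π i) (π i x)) := by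
  simp_rw [entropy_eq_tsum_mul_negLog, PMF.tsum_map_apply_mul, ← ENNReal.tsum_mul_left]
  exact ENNReal.tsum_comm

lemma sum_prod_apply_le_one {X ι : Type*} {Y : ι → Type*} (μ : ∀ i, PMF (Y i))
    (π : ∀ i, X → Y i) (s : Finset ι) (F : Finset X)
    (hF : Set.InjOn (fun x (i : s) => π i x) F) :
    ∑ x ∈ F, ∏ i ∈ s, μ i (π i x) ≤ 1 := by
  classical
  let t : ∀ i : s, Finset (Y i) := fun i => F.image (π i)
  calc ∑ x ∈ F, ∏ i ∈ s, μ i (π i x)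
      = ∑ y ∈ F.image (fun x (i : s) => π i x), ∏ i : s, μ i (y i) := by
        rw [Finset.sum_image hF]
        exact Finset.sum_congr rfl fun x _ => (Finset.prod_coe_sort s _).symm
    _ ≤ ∑ y ∈ Fintype.piFinset t, ∏ i : s, μ i (y i) := by
        refine Finset.sum_le_sum_of_subset fun y hy => ?_
        obtain ⟨x, hx, rfl⟩ := Finset.mem_image.mp hy
        exact Fintype.mem_piFinset.mpr fun i => Finset.mem_image_of_mem _ hx
    _ = ∏ i : s, ∑ y ∈ t i, μ i y := (Finset.prod_univ_sum t _).symm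
    _ ≤ 1 := Finset.prod_le_one' fun i _ =>
        (ENNReal.sum_le_tsum _).trans (μ i).tsum_coe.le

lemma exists_finset_injOn_restrict {X ι : Type*} {Y : ι → Type*} (π : ∀ i, X → Y i)
    (hsep : ∀ x y, (∀ i, π i x = π i y) → x = y) (F : Finset X) :
    ∃ s : Finset ι, Set.InjOn (fun x (i : s) => π i x) F := by
  classical
  have separating_finset : ∀ x y, ∃ t : Finset ι, (∀ i ∈ t, π i x = π i y) → x = y := by
    intro x y
    by_cases hxy : x = y
    · exact ⟨∅, fun _ => hxy⟩
    · obtain ⟨i, hi⟩ : ∃ i, π i x ≠ π i y := by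
        by_contra! h
        exact hxy (hsep x y h)
      exact ⟨{i}, fun h => absurd (h i (Finset.mem_singleton_self i)) hi⟩
  choose t ht using separating_finset
  refine ⟨(F ×ˢ F).biUnion fun p => t p.1 p.2, fun x hx y hy hxy => ht x y fun i hi => ?_⟩
  exact congr_fun hxy ⟨i, Finset.mem_biUnion.mpr ⟨(x, y), Finset.mem_product.mpr ⟨hx, hy⟩, hi⟩⟩

theorem entropy_le_tsum_entropy_map_general {X : Type*} {I : Type*}
    (Y : I → Type*) (π : (i : I) → X → Y i)
    (hsep : ∀ x y : X, (∀ i, π i x = π i y) → x = y) (m : PMF X) :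
    entropy m ≤ ∑' i, entropy (m.map (π i)) := by
  rw [tsum_entropy_map_eq]
  refine entropy_le_tsum_mul_of_forall_finset m _ fun F => ?_
  obtain ⟨s, hs⟩ := exists_finset_injOn_restrict π hsep F
  refine ⟨fun x => ∏ i ∈ s, m.map (π i) (π i x), sum_prod_apply_le_one _ π s F hs,
    fun x _ => ?_⟩
  rw [negLog_prod s _ fun i _ => PMF.coe_le_one _ _]
  exact ENNReal.sum_le_tsum s

/-- If a countable family of maps `π_i : X → Y_i` separates the points of a
countable set `X`, then the entropy of a probability measure `m` on `X` does
not exceed the sum of the entropies of its images `π_i m`. -/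
theorem entropy_le_tsum_entropy_map {X : Type*} [Countable X] {I : Type*}
    [Countable I] (Y : I → Type*) (π : (i : I) → X → Y i)
    (hsep : ∀ x y : X, (∀ i, π i x = π i y) → x = y) (m : PMF X) :
    entropy m ≤ ∑' i, entropy (m.map (π i)) :=
  entropy_le_tsum_entropy_map_general Y π hsep m
end
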